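/- arXiv:0809.4387 — 2 statements merged into one kernel-verified Lean document; each statement's English description precedes it below -/
import Mathlib

section
/- If for some r ≥ 1, Φ_r(t) → ∞ as t → ∞, then Φ_s(t) → ∞ for all 1 ≤ s ≤ r; and if sup_t Φ_r(t) < ∞ for some r ≥ 1, then sup_t Φ_s(t) < ∞ for all s ≥ r. -/
noncomputable def Phi (p : ℕ → ℝ) (r : ℕ) (t : ℝ) : ℝ :=
  ∑' j : ℕ, Real.exp (-(t * p j)) * (t * p j) ^ r / r.factorial

/-!
Each summand of `Phi p r t` is a Poisson weight `e^{-x} x^r / r!` at `x = t p_j`. Splitting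
`(2x)^r = 2^r x^s x^(r-s)` and `e^{-2x} = e^{-x} e^{-x}`, and bounding
`e^{-x} x^(r-s) ≤ (r-s)!`, gives a termwise doubling inequality `Φ_r(2t) ≤ C Φ_s(t)` for
`s ≤ r`. Read at `t` it transfers divergence from `Φ_r` down to `Φ_s`; read at `t/2` with the
roles of `r` and `s` exchanged it transfers boundedness from `Φ_r` up to `Φ_s`. For `r ≥ 1` the
weight is at most `x`, so the series converge because `∑ p_j` does (a divergent `tsum` would be
the junk value `0`).
-/

open Real Filter Nat

noncomputable def poissonTerm (r : ℕ) (x : ℝ) : ℝ := exp (-x) * x ^ r / r !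

lemma Phi_eq_tsum_poissonTerm (p : ℕ → ℝ) (r : ℕ) (t : ℝ) :
    Phi p r t = ∑' j, poissonTerm r (t * p j) := rfl

lemma poissonTerm_nonneg (r : ℕ) {x : ℝ} (hx : 0 ≤ x) : 0 ≤ poissonTerm r x := by
  unfold poissonTerm; positivity

lemma exp_neg_mul_pow_le_factorial {x : ℝ} (hx : 0 ≤ x) (n : ℕ) :
    exp (-x) * x ^ n ≤ n ! := by
  have h := pow_div_factorial_le_exp x hx n
  rw [div_le_iff₀ (by positivity)] at h
  calc exp (-x) * x ^ n ≤ exp (-x) * (exp x * n !) := by gcongr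
    _ = n ! := by rw [← mul_assoc, ← exp_add, neg_add_cancel, exp_zero, one_mul]

lemma poissonTerm_le_self {r : ℕ} (hr : 1 ≤ r) {x : ℝ} (hx : 0 ≤ x) :
    poissonTerm r x ≤ x := by
  obtain ⟨k, rfl⟩ := Nat.exists_eq_add_of_le' hr
  have hk := exp_neg_mul_pow_le_factorial hx k
  have hfac : (k ! : ℝ) ≤ (k + 1)! := by exact_mod_cast factorial_le (Nat.le_succ k)
  unfold poissonTerm
  rw [div_le_iff₀ (by positivity), pow_succ, ← mul_assoc]
  calc exp (-x) * x ^ k * x ≤ k ! * x := by gcongr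
    _ ≤ x * (k + 1)! := by rw [mul_comm]; gcongr

lemma poissonTerm_two_mul_le {s r : ℕ} (hsr : s ≤ r) {x : ℝ} (hx : 0 ≤ x) :
    poissonTerm r (2 * x) ≤ (2 ^ r * s ! * (r - s)! / r !) * poissonTerm s x := by
  have hrest := exp_neg_mul_pow_le_factorial hx (r - s)
  have hsplit : (2 * x) ^ r = 2 ^ r * x ^ s * x ^ (r - s) := by
    rw [mul_pow, mul_assoc, ← pow_add, Nat.add_sub_cancel' hsr]
  have hexp : exp (-(2 * x)) = exp (-x) * exp (-x) := by rw [← exp_add]; ring_nf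
  unfold poissonTerm
  calc exp (-(2 * x)) * (2 * x) ^ r / r !
      = 2 ^ r / r ! * (exp (-x) * x ^ s) * (exp (-x) * x ^ (r - s)) := by
        rw [hexp, hsplit]; ring
    _ ≤ 2 ^ r / r ! * (exp (-x) * x ^ s) * (r - s)! := by gcongr
    _ = 2 ^ r * s ! * (r - s)! / r ! * (exp (-x) * x ^ s / s !) := by field_simp

lemma summable_poissonTerm {p : ℕ → ℝ} (hp : ∀ j, 0 ≤ p j) (hps : Summable p) {r : ℕ}
    (hr : 1 ≤ r) {t : ℝ} (ht : 0 ≤ t) :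
    Summable fun j => poissonTerm r (t * p j) :=
  (hps.mul_left t).of_nonneg_of_le (fun j => poissonTerm_nonneg r (mul_nonneg ht (hp j)))
    fun j => poissonTerm_le_self hr (mul_nonneg ht (hp j))

lemma Phi_two_mul_le {p : ℕ → ℝ} (hp : ∀ j, 0 ≤ p j) (hps : Summable p) {s r : ℕ}
    (hs : 1 ≤ s) (hsr : s ≤ r) {t : ℝ} (ht : 0 ≤ t) :
    Phi p r (2 * t) ≤ (2 ^ r * s ! * (r - s)! / r !) * Phi p s t := by
  simp only [Phi_eq_tsum_poissonTerm, ← tsum_mul_left]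
  refine (summable_poissonTerm hp hps (hs.trans hsr) (by positivity)).tsum_le_tsum
    (fun j => ?_) ((summable_poissonTerm hp hps hs ht).mul_left _)
  rw [mul_assoc]
  exact poissonTerm_two_mul_le hsr (mul_nonneg ht (hp j))

theorem stmt_7_general (p : ℕ → ℝ) (hp : ∀ j, 0 < p j)
    (hsum : ∑' j : ℕ, p j = 1) (r : ℕ) (hr : 1 ≤ r) :
    (Filter.Tendsto (fun t => Phi p r t) Filter.atTop Filter.atTop →
      ∀ s : ℕ, 1 ≤ s → s ≤ r →
        Filter.Tendsto (fun t => Phi p s t) Filter.atTop Filter.atTop) ∧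
    ((∃ M : ℝ, ∀ t : ℝ, 0 < t → Phi p r t ≤ M) →
      ∀ s : ℕ, r ≤ s → ∃ M : ℝ, ∀ t : ℝ, 0 < t → Phi p s t ≤ M) := by
  have hp' : ∀ j, 0 ≤ p j := fun j => (hp j).le
  have hps : Summable p := by
    by_contra h
    simp [tsum_eq_zero_of_not_summable h] at hsum
  constructor
  · intro hdiv s hs hsr
    set C : ℝ := 2 ^ r * s ! * (r - s)! / (r !)
    have hC : 0 < C := by positivity
    have hdiv₂ : Tendsto (fun t => C⁻¹ * Phi p r (2 * t)) atTop atTop :=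
      (hdiv.comp (tendsto_id.const_mul_atTop two_pos)).const_mul_atTop (inv_pos.2 hC)
    refine tendsto_atTop_mono' _ ?_ hdiv₂
    filter_upwards [eventually_ge_atTop 0] with t ht
    rw [inv_mul_le_iff₀ hC]
    exact Phi_two_mul_le hp' hps hs hsr ht
  · rintro ⟨M, hM⟩ s hrs
    refine ⟨2 ^ s * r ! * (s - r)! / s ! * M, fun t ht => ?_⟩
    calc Phi p s t = Phi p s (2 * (t / 2)) := by rw [mul_div_cancel₀ t two_ne_zero]
      _ ≤ 2 ^ s * r ! * (s - r)! / s ! * Phi p r (t / 2) :=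
        Phi_two_mul_le hp' hps hr hrs (by positivity)
      _ ≤ 2 ^ s * r ! * (s - r)! / s ! * M := by gcongr; exact hM _ (half_pos ht)

theorem stmt_7 (p : ℕ → ℝ) (hp : ∀ j, 0 < p j) (hdec : ∀ j, p (j + 1) ≤ p j)
    (hsum : ∑' j : ℕ, p j = 1) (r : ℕ) (hr : 1 ≤ r) :
    (Filter.Tendsto (fun t => Phi p r t) Filter.atTop Filter.atTop →
      ∀ s : ℕ, 1 ≤ s → s ≤ r →
        Filter.Tendsto (fun t => Phi p s t) Filter.atTop Filter.atTop) ∧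
    ((∃ M : ℝ, ∀ t : ℝ, 0 < t → Phi p r t ≤ M) →
      ∀ s : ℕ, r ≤ s → ∃ M : ℝ, ∀ t : ℝ, 0 < t → Phi p s t ≤ M) :=
  stmt_7_general p hp hsum r hr
end

section
/- If limsup_{j→∞} p_{j+1}/p_j < 1 then sup_{t>0} Φ_r(t) < ∞ for every r ≥ 1; if lim_{j→∞} p_{j+1}/p_j = 1 then Φ_r(t) → ∞ as t → ∞ for every r ≥ 1. -/
open Filter Topology Finset

noncomputable def poissonWeight (r : ℕ) (x : ℝ) : ℝ :=
  Real.exp (-x) * x ^ r / r.factorial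

lemma Phi_eq_tsum_poissonWeight (p : ℕ → ℝ) (r : ℕ) (t : ℝ) :
    Phi p r t = ∑' j, poissonWeight r (t * p j) := rfl

section poissonWeight

variable {r : ℕ} {x : ℝ}

lemma poissonWeight_nonneg (hx : 0 ≤ x) : 0 ≤ poissonWeight r x := by
  unfold poissonWeight; positivity

lemma poissonWeight_succ (r : ℕ) (x : ℝ) :
    poissonWeight (r + 1) x = x / (r + 1) * poissonWeight r x := by
  simp only [poissonWeight, Nat.factorial_succ, Nat.cast_mul, Nat.cast_succ, pow_succ]
  field_simp

lemma poissonWeight_le_one (hx : 0 ≤ x) : poissonWeight r x ≤ 1 :=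
  calc poissonWeight r x = Real.exp (-x) * (x ^ r / r.factorial) := mul_div_assoc _ _ _
    _ ≤ Real.exp (-x) * Real.exp x := by gcongr; exact Real.pow_div_factorial_le_exp _ hx r
    _ = 1 := by rw [← Real.exp_add, neg_add_cancel, Real.exp_zero]

lemma poissonWeight_le_self (hr : r ≠ 0) (hx : 0 ≤ x) : poissonWeight r x ≤ x := by
  obtain ⟨s, rfl⟩ := Nat.exists_eq_succ_of_ne_zero hr
  rw [poissonWeight_succ]
  calc x / (s + 1) * poissonWeight s x ≤ x / 1 * 1 := by
        gcongr
        · exact poissonWeight_nonneg hx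
        · linarith
        · exact poissonWeight_le_one hx
    _ = x := by ring

lemma poissonWeight_le_div (hx : 0 < x) : poissonWeight r x ≤ (r + 1) / x := by
  have h := poissonWeight_le_one (r := r + 1) hx.le
  rw [poissonWeight_succ, div_mul_eq_mul_div, div_le_one (by positivity)] at h
  rw [le_div_iff₀ hx]
  linarith

lemma le_poissonWeight_of_mem_Icc {a b : ℝ} (ha : 0 ≤ a) (hax : a ≤ x) (hxb : x ≤ b) :
    Real.exp (-b) * a ^ r / r.factorial ≤ poissonWeight r x := by
  unfold poissonWeight
  gcongr

end poissonWeight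

lemma summable_poissonWeight {p : ℕ → ℝ} (hp : ∀ j, 0 ≤ p j) (hps : Summable p) {r : ℕ}
    (hr : r ≠ 0) {t : ℝ} (ht : 0 ≤ t) : Summable fun j => poissonWeight r (t * p j) :=
  (hps.mul_left t).of_nonneg_of_le (fun j => poissonWeight_nonneg (mul_nonneg ht (hp j)))
    fun j => poissonWeight_le_self hr (mul_nonneg ht (hp j))

section RatioBelowOne

variable {x g : ℕ → ℝ} {c C : ℝ}

lemma le_pow_mul_of_le_mul (hc : 0 ≤ c) (hstep : ∀ k, x (k + 1) ≤ c * x k) (k i : ℕ) :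
    x (k + i) ≤ c ^ i * x k := by
  simpa using le_geom (u := fun i => x (k + i)) hc i fun j _ => hstep (k + j)

lemma tsum_le_of_le_mul_of_le_div (hx : ∀ k, 0 < x k) (hc : c < 1)
    (hstep : ∀ k, x (k + 1) ≤ c * x k) (hg0 : ∀ k, 0 ≤ g k) (hgx : ∀ k, g k ≤ C * x k)
    (hgx' : ∀ k, g k ≤ C / x k) : ∑' k, g k ≤ 2 * C / (1 - c) := by
  have hc0 : 0 < c := pos_of_mul_pos_left ((hx 1).trans_le (hstep 0)) (hx 0).le
  have hC : 0 ≤ C := nonneg_of_mul_nonneg_left ((hg0 0).trans (hgx 0)) (hx 0)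
  have hgeo := le_pow_mul_of_le_mul hc0.le hstep
  have hxs : Summable x := summable_of_ratio_norm_eventually_le hc <| .of_forall fun k => by
    simpa [Real.norm_eq_abs, abs_of_pos (hx _)] using hstep k
  have hgs : Summable g := (hxs.mul_left C).of_nonneg_of_le hg0 hgx
  have hex : ∃ m, x m ≤ 1 :=
    (hxs.tendsto_atTop_zero.eventually (eventually_le_nhds one_pos)).exists
  classical
  set m := Nat.find hex
  have hhead : ∀ k < m, g k ≤ C * c ^ (m - 1 - k) := by
    intro k hk
    have h1 : 1 < x (m - 1) := not_le.1 (Nat.find_min hex (by omega))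
    have h2 : x (m - 1) ≤ c ^ (m - 1 - k) * x k := by
      simpa [show k + (m - 1 - k) = m - 1 by omega] using hgeo k (m - 1 - k)
    calc g k ≤ C / x k := hgx' k
      _ ≤ C * c ^ (m - 1 - k) := by
        rw [div_le_iff₀ (hx k), mul_assoc]
        exact le_mul_of_one_le_right hC (by linarith)
  have htail : ∀ i, g (i + m) ≤ C * c ^ i := fun i =>
    calc g (i + m) ≤ C * x (m + i) := add_comm i m ▸ hgx _
      _ ≤ C * (c ^ i * 1) := by
        gcongr
        exact (hgeo m i).trans (by gcongr; exact Nat.find_spec hex)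
      _ = C * c ^ i := by ring
  rw [← hgs.sum_add_tsum_nat_add m]
  calc ∑ k ∈ range m, g k + ∑' i, g (i + m)
      ≤ ∑ k ∈ range m, C * c ^ (m - 1 - k) + ∑' i, C * c ^ i := by
        refine add_le_add (sum_le_sum fun k hk => hhead k (mem_range.1 hk)) ?_
        exact ((summable_nat_add_iff m).2 hgs).tsum_le_tsum htail
          ((summable_geometric_of_lt_one hc0.le hc).mul_left C)
    _ ≤ C * (1 - c)⁻¹ + C * (1 - c)⁻¹ := by
        rw [← mul_sum, sum_range_reflect (fun k => c ^ k) m, tsum_mul_left,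
          tsum_geometric_of_lt_one hc0.le hc]
        gcongr
        simpa [← range_eq_Ico] using geom_sum_Ico_le_of_lt_one (m := 0) (n := m) hc0.le hc
    _ = 2 * C / (1 - c) := by ring

end RatioBelowOne

lemma exists_lt_one_eventually_le_mul_of_limsup_lt_one {p : ℕ → ℝ} (hp : ∀ j, 0 < p j)
    (hdec : ∀ j, p (j + 1) ≤ p j) (h : limsup (fun j => p (j + 1) / p j) atTop < 1) :
    ∃ c < 1, ∀ᶠ j in atTop, p (j + 1) ≤ c * p j := by
  obtain ⟨c, hlt, hc⟩ := exists_between h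
  have hbdd : IsBoundedUnder (· ≤ ·) atTop fun j => p (j + 1) / p j :=
    isBoundedUnder_of_eventually_le (a := 1) <|
      .of_forall fun j => div_le_one_of_le₀ (hdec j) (hp j).le
  refine ⟨c, hc, (eventually_lt_of_limsup_lt hlt hbdd).mono fun j hj => ?_⟩
  exact (div_le_iff₀ (hp j)).1 hj.le

theorem exists_Phi_le_of_limsup_lt_one {p : ℕ → ℝ} (hp : ∀ j, 0 < p j)
    (hdec : ∀ j, p (j + 1) ≤ p j) (hps : Summable p)
    (h : limsup (fun j => p (j + 1) / p j) atTop < 1) {r : ℕ} (hr : r ≠ 0) :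
    ∃ M, ∀ t, 0 < t → Phi p r t ≤ M := by
  obtain ⟨c, hc, hev⟩ := exists_lt_one_eventually_le_mul_of_limsup_lt_one hp hdec h
  obtain ⟨J, hJ⟩ := eventually_atTop.1 hev
  refine ⟨J + 2 * (r + 1) / (1 - c), fun t ht => ?_⟩
  have hx : ∀ j, 0 < t * p j := fun j => mul_pos ht (hp j)
  have hs := summable_poissonWeight (fun j => (hp j).le) hps hr ht.le
  rw [Phi_eq_tsum_poissonWeight, ← hs.sum_add_tsum_nat_add J]
  refine add_le_add ?_ ?_
  · calc ∑ j ∈ range J, poissonWeight r (t * p j) ≤ ∑ _j ∈ range J, (1 : ℝ) :=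
          sum_le_sum fun j _ => poissonWeight_le_one (hx j).le
      _ = J := by simp
  · refine tsum_le_of_le_mul_of_le_div (x := fun k => t * p (k + J)) (fun k => hx _) hc
      (fun k => ?_) (fun k => poissonWeight_nonneg (hx _).le) (fun k => ?_)
      (fun k => poissonWeight_le_div (hx _))
    · rw [Nat.add_right_comm, ← mul_left_comm]
      exact mul_le_mul_of_nonneg_left (hJ _ (Nat.le_add_left J k)) ht.le
    · exact (poissonWeight_le_self hr (hx _).le).trans
        (le_mul_of_one_le_left (hx _).le (by linarith [r.cast_nonneg (α := ℝ)]))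

lemma tendsto_div_add_of_tendsto_div_succ {p : ℕ → ℝ} (hp : ∀ j, p j ≠ 0)
    (h : Tendsto (fun j => p (j + 1) / p j) atTop (𝓝 1)) (k : ℕ) :
    Tendsto (fun j => p (j + k) / p j) atTop (𝓝 1) := by
  induction k with
  | zero => simp [div_self (hp _)]
  | succ k ih =>
    have hprod := (h.comp (tendsto_add_atTop_nat k)).mul ih
    rw [one_mul] at hprod
    refine hprod.congr fun j => ?_
    simp only [Function.comp_apply, ← add_assoc]
    rw [div_mul_div_cancel₀ (hp _)]

lemma exists_le_and_succ_lt {α : Type*} [LinearOrder α] {x : ℕ → α} {a : α} {J j : ℕ}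
    (hJ : a ≤ x J) (hj : J ≤ j) (hxj : x j < a) :
    ∃ n, J ≤ n ∧ a ≤ x n ∧ x (n + 1) < a := by
  by_contra! H
  have hle : ∀ n, J ≤ n → a ≤ x n := fun n hn => Nat.le_induction hJ H n hn
  exact (hle j hj).not_gt hxj

lemma exists_block_mem_Icc {p : ℕ → ℝ} (hanti : Antitone p) (hp0 : Tendsto p atTop (𝓝 0))
    {N J : ℕ} (hJ : ∀ j ≥ J, p j / 2 ≤ p (j + N)) {a t : ℝ} (ha : 0 < a)
    (ht : a ≤ t * p J) :
    ∃ m, ∀ k < N, a / 2 ≤ t * p (m + k) ∧ t * p (m + k) ≤ a := by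
  have ht0 : 0 < t := pos_of_mul_pos_left (ha.trans_le ht) (hanti.le_of_tendsto hp0 J)
  have hsmall : ∀ᶠ j in atTop, t * p j < a := by
    simpa using (hp0.const_mul t).eventually (eventually_lt_nhds (by simpa using ha))
  obtain ⟨j, hj, hxj⟩ := (hsmall.and (eventually_ge_atTop J)).exists.imp fun _ h => h.symm
  obtain ⟨n, hn, hxn, hxn1⟩ := exists_le_and_succ_lt (x := fun j => t * p j) ht hj hxj
  refine ⟨n + 1, fun k hk => ⟨?_, ?_⟩⟩
  · calc a / 2 ≤ t * (p n / 2) := by linarith [show t * (p n / 2) = t * p n / 2 by ring]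
      _ ≤ t * p (n + N) := by gcongr; exact hJ n hn
      _ ≤ t * p (n + 1 + k) := by gcongr; exact hanti (by omega)
  · calc t * p (n + 1 + k) ≤ t * p (n + 1) := by gcongr; exact hanti (by omega)
      _ ≤ a := hxn1.le

theorem tendsto_Phi_atTop_of_tendsto_ratio_one {p : ℕ → ℝ} (hp : ∀ j, 0 < p j)
    (hdec : ∀ j, p (j + 1) ≤ p j) (hps : Summable p)
    (h : Tendsto (fun j => p (j + 1) / p j) atTop (𝓝 1)) {r : ℕ} (hr : r ≠ 0) :
    Tendsto (Phi p r) atTop atTop := by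
  have hr0 : (0 : ℝ) < r := by positivity
  set δ := Real.exp (-r) * ((r : ℝ) / 2) ^ r / r.factorial
  have hδ : 0 < δ := by positivity
  refine tendsto_atTop.2 fun b => ?_
  obtain ⟨N, hN⟩ := exists_nat_gt (b / δ)
  obtain ⟨J, hJ⟩ := eventually_atTop.1 <| (tendsto_div_add_of_tendsto_div_succ
    (fun j => (hp j).ne') h N).eventually (eventually_gt_nhds (by norm_num : (1 : ℝ) / 2 < 1))
  filter_upwards [eventually_ge_atTop (r / p J)] with t ht
  have ht0 : 0 ≤ t := (div_nonneg hr0.le (hp J).le).trans ht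
  have hhalf : ∀ j ≥ J, p j / 2 ≤ p (j + N) := fun j hj => by
    linarith [(lt_div_iff₀ (hp j)).1 (hJ j hj)]
  obtain ⟨m, hm⟩ := exists_block_mem_Icc (antitone_nat_of_succ_le hdec) hps.tendsto_atTop_zero
    hhalf hr0 ((div_le_iff₀ (hp J)).1 ht)
  calc b ≤ N * δ := ((div_lt_iff₀ hδ).1 hN).le
    _ = ∑ _k ∈ range N, δ := by simp
    _ ≤ ∑ k ∈ range N, poissonWeight r (t * p (m + k)) := sum_le_sum fun k hk =>
        le_poissonWeight_of_mem_Icc (by positivity) (hm k (mem_range.1 hk)).1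
          (hm k (mem_range.1 hk)).2
    _ = ∑ j ∈ Ico m (m + N), poissonWeight r (t * p j) := by simp [sum_Ico_eq_sum_range]
    _ ≤ Phi p r t := (summable_poissonWeight (fun j => (hp j).le) hps hr ht0).sum_le_tsum _
        fun j _ => poissonWeight_nonneg (mul_nonneg ht0 (hp j).le)

theorem stmt_16 (p : ℕ → ℝ) (hp : ∀ j, 0 < p j) (hdec : ∀ j, p (j + 1) ≤ p j)
    (hsum : ∑' j : ℕ, p j = 1) :
    (Filter.limsup (fun j : ℕ => p (j + 1) / p j) Filter.atTop < 1 →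
      ∀ r : ℕ, 1 ≤ r → ∃ M : ℝ, ∀ t : ℝ, 0 < t → Phi p r t ≤ M) ∧
    (Filter.Tendsto (fun j : ℕ => p (j + 1) / p j) Filter.atTop (nhds 1) →
      ∀ r : ℕ, 1 ≤ r →
        Filter.Tendsto (fun t => Phi p r t) Filter.atTop Filter.atTop) := by
  have hps : Summable p := by
    by_contra h
    simp [tsum_eq_zero_of_not_summable h] at hsum
  exact ⟨fun h r hr => exists_Phi_le_of_limsup_lt_one hp hdec hps h (Nat.one_le_iff_ne_zero.1 hr),
    fun h r hr =>
      tendsto_Phi_atTop_of_tendsto_ratio_one hp hdec hps h (Nat.one_le_iff_ne_zero.1 hr)⟩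
end
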